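/- arXiv:1308.6718 — 4 statements merged into one kernel-verified Lean document; each statement's English description precedes it below -/
import Mathlib

section
/- Let x, w be real numbers and y a complex number. The 2×2 Hermitian matrix W = [[x, conj(y)], [y, w]] is positive semidefinite if and only if sqrt((x - w)^2 + (2·Re y)^2 + (2·Im y)^2) ≤ x + w. (This shows that a 2×2 Hermitian positive semidefiniteness constraint is representable as a second-order cone constraint in R^3.) -/
open ComplexOrder

/-!
A 2×2 Hermitian matrix is positive semidefinite iff both of its (real) eigenvalues are
nonnegative, i.e. iff their sum (the trace) and their product (the determinant) are nonnegative.
For `W` these are `x + w` and `x w - |y|²`, and `(x - w)² + 4|y|² = (x + w)² - 4 (x w - |y|²)`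
turns the pair of conditions into the cone constraint.
-/

lemma nonneg_and_nonneg_iff_add_nonneg_and_mul_nonneg {a b : ℝ} :
    0 ≤ a ∧ 0 ≤ b ↔ 0 ≤ a + b ∧ 0 ≤ a * b := by
  refine ⟨fun ⟨ha, hb⟩ ↦ ⟨add_nonneg ha hb, mul_nonneg ha hb⟩, fun ⟨hs, hp⟩ ↦ ?_⟩
  constructor <;> nlinarith

theorem Matrix.IsHermitian.posSemidef_iff_trace_nonneg_and_det_nonneg {𝕜 : Type*} [RCLike 𝕜]
    {A : Matrix (Fin 2) (Fin 2) 𝕜} (hA : A.IsHermitian) :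
    A.PosSemidef ↔ 0 ≤ A.trace ∧ 0 ≤ A.det := by
  rw [hA.posSemidef_iff_eigenvalues_nonneg, hA.trace_eq_sum_eigenvalues,
    hA.det_eq_prod_eigenvalues, Fin.sum_univ_two, Fin.prod_univ_two, Pi.le_def,
    Fin.forall_fin_two, ← RCLike.ofReal_add, ← RCLike.ofReal_mul, RCLike.ofReal_nonneg,
    RCLike.ofReal_nonneg]
  exact nonneg_and_nonneg_iff_add_nonneg_and_mul_nonneg

/-- A 2×2 Hermitian matrix `[[x, conj y], [y, w]]` (with `x, w` real, `y` complex)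
is positive semidefinite iff `sqrt((x-w)² + (2 Re y)² + (2 Im y)²) ≤ x + w`,
i.e. the PSD constraint is a second-order cone constraint in ℝ³. -/
theorem stmt_0 (x w : ℝ) (y : ℂ) :
    (Matrix.PosSemidef !![(x : ℂ), (starRingEnd ℂ) y; y, (w : ℂ)]) ↔
      Real.sqrt ((x - w) ^ 2 + (2 * y.re) ^ 2 + (2 * y.im) ^ 2) ≤ x + w := by
  have hW : (!![(x : ℂ), (starRingEnd ℂ) y; y, (w : ℂ)]).IsHermitian := by
    ext i j
    fin_cases i <;> fin_cases j <;> simp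
  have hdet : (!![(x : ℂ), (starRingEnd ℂ) y; y, (w : ℂ)]).det =
      ((x * w - Complex.normSq y : ℝ) : ℂ) := by
    rw [Matrix.det_fin_two_of, Complex.ofReal_sub, Complex.normSq_eq_conj_mul_self]
    push_cast
    ring
  rw [hW.posSemidef_iff_trace_nonneg_and_det_nonneg, hdet, Matrix.trace_fin_two_of,
    ← Complex.ofReal_add, Complex.zero_le_real, Complex.zero_le_real, Real.sqrt_le_iff,
    Complex.normSq_apply]
  constructor <;> rintro ⟨hsum, hdiscr⟩ <;> exact ⟨hsum, by nlinarith⟩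
end

section
/- Let a, b ∈ C^n with a_i ≠ 0 for all i. Suppose |a_i| = |b_i| for all i (equal diagonals of the outer products) and a_{i+1} · conj(a_i) = b_{i+1} · conj(b_i) for all i = 1, ..., n-1 (equal first sub/super-diagonals of the outer products). Then a a^H = b b^H. (Hence a rank-1 Hermitian matrix with nonzero diagonal is determined by its diagonal and first off-diagonal entries, which underlies the recovery of relative phase information from the band CSDR with half-bandwidth ρ ≥ 1.) -/
/-!
Writing `b i = c i * a i` with the phases `c i = b i / a i`, equal moduli give `‖c i‖ = 1`, and
equal first off-diagonals give `c (i+1) * conj (c i) = 1`, hence `c (i+1) = c i`. So all phases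
equal one unimodular constant, which cancels in every entry `b i * conj (b j)`.
-/

open ComplexConjugate

theorem Fin.apply_eq_apply_of_forall_succ {α : Type*} {n : ℕ} (f : Fin n → α)
    (hf : ∀ (i : ℕ) (h : i + 1 < n), f ⟨i + 1, h⟩ = f ⟨i, Nat.lt_of_succ_lt h⟩) (i j : Fin n) :
    f i = f j := by
  have hn : 0 < n := i.pos
  have eq_zero : ∀ (m : ℕ) (hm : m < n), f ⟨m, hm⟩ = f ⟨0, hn⟩ := by
    intro m
    induction m with
    | zero => intro _; rfl
    | succ k ih => intro hk; rw [hf k hk]; exact ih _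
  rw [eq_zero i i.2, eq_zero j j.2]

section RCLike

variable {𝕜 : Type*} [RCLike 𝕜]

theorem RCLike.eq_of_mul_conj_eq_one {z w : 𝕜} (hw : ‖w‖ = 1) (h : z * conj w = 1) : z = w :=
  calc z = z * (conj w * w) := by rw [RCLike.conj_mul, hw]; simp
    _ = w := by rw [← mul_assoc, h, one_mul]

theorem RCLike.mul_mul_conj_mul_of_norm_eq_one {c : 𝕜} (hc : ‖c‖ = 1) (x y : 𝕜) :
    c * x * conj (c * y) = x * conj y := by
  have hcc : conj c * c = 1 := by rw [RCLike.conj_mul, hc]; simp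
  rw [map_mul]
  linear_combination x * conj y * hcc

end RCLike

/-- If `a, b ∈ ℂⁿ` have all entries of `a` nonzero, equal entrywise moduli
(`|a_i| = |b_i|`, i.e. equal diagonals of the outer products), and equal first
sub/super-diagonals (`a_{i+1} conj(a_i) = b_{i+1} conj(b_i)`), then `a aᴴ = b bᴴ`.
This underlies the recovery of relative phase from the band CSDR with `ρ ≥ 1`. -/
theorem stmt_8 (n : ℕ) (a b : Fin n → ℂ) (ha : ∀ i, a i ≠ 0)
    (hdiag : ∀ i, ‖a i‖ = ‖b i‖)
    (hoff : ∀ i : ℕ, ∀ h : i + 1 < n,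
      a ⟨i + 1, h⟩ * (starRingEnd ℂ) (a ⟨i, Nat.lt_of_succ_lt h⟩) =
        b ⟨i + 1, h⟩ * (starRingEnd ℂ) (b ⟨i, Nat.lt_of_succ_lt h⟩)) :
    Matrix.vecMulVec a (star a) = Matrix.vecMulVec b (star b) := by
  set c : Fin n → ℂ := fun i => b i / a i
  have hb : ∀ i, b i = c i * a i := fun i => (div_mul_cancel₀ _ (ha i)).symm
  have hc : ∀ i, ‖c i‖ = 1 := fun i => by
    rw [norm_div, ← hdiag i, div_self (norm_ne_zero_iff.mpr (ha i))]
  have hconst : ∀ i j, c i = c j := by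
    refine Fin.apply_eq_apply_of_forall_succ c fun i h => RCLike.eq_of_mul_conj_eq_one (hc _) ?_
    rw [map_div₀, div_mul_div_comm, ← hoff i h]
    exact div_self (mul_ne_zero (ha _) ((map_ne_zero _).mpr (ha _)))
  ext i j
  simp only [Matrix.vecMulVec_apply, Pi.star_apply, RCLike.star_def]
  rw [hb i, hb j, hconst i j, RCLike.mul_mul_conj_mul_of_norm_eq_one (hc j)]
end

section
/- Let G be a tree on a finite vertex set V, and let X be a Hermitian complex matrix indexed by V. Suppose that for every edge {i, j} of G, the 2×2 principal submatrix [[X_{ii}, X_{ij}], [X_{ji}, X_{jj}]] is positive semidefinite, and that X_{ii} ≥ 0 for all i. Then there exists a positive semidefinite Hermitian matrix Y indexed by V such that Y_{ii} = X_{ii} for all i ∈ V and Y_{ij} = X_{ij} whenever {i, j} is an edge of G. (This is the positive semidefinite matrix completion property for tree sparsity patterns: when the network graph is a tree, positive semidefiniteness of all 2×2 clique blocks suffices for the existence of a positive semidefinite completion.) -/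
/-!
Root the tree at `r` and build vectors `u v`, indexed by the vertices, from the root outwards,
using an orthonormal family `e v`: `u r = √(X r r) • e r`, and `u v = c • u p + t • e v` when `p` is
the parent of `v`. As `u p` only involves the `e k` with `k` no deeper than `p`, it is orthogonal to
`e v`, so `c` and `t` can be chosen with `⟪u p, u v⟫ = X p v` and `‖u v‖² = X v v`; this is
possible exactly because the `2 × 2` block of `X` on the edge `{p, v}` is positive semidefinite.
Every tree edge joins a vertex to its parent, so the Gram matrix of the `u v` is the completion.
-/

open ComplexOrder

open RCLike Matrix
open scoped InnerProductSpace ComplexConjugate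

section GramExtend

variable {𝕜 E : Type*} [RCLike 𝕜] [NormedAddCommGroup E] [InnerProductSpace 𝕜 E]

lemma RCLike.ofReal_re_of_nonneg {z : 𝕜} (hz : 0 ≤ z) : (re z : 𝕜) = z := by
  obtain ⟨x, -, rfl⟩ := nonneg_iff_exists_ofReal.mp hz
  rw [ofReal_re]

lemma Matrix.PosSemidef.norm_sq_le_re_mul_re {a b c d : 𝕜} (h : (!![a, b; c, d]).PosSemidef) :
    ‖b‖ ^ 2 ≤ re a * re d := by
  have hc : c = conj b := by simpa using (h.isHermitian.apply 1 0).symm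
  have ha : im a = 0 := (nonneg_iff.mp (h.diag_nonneg (i := 0))).2
  have hdet := (nonneg_iff.mp h.det_nonneg).1
  rw [det_fin_two_of, hc, mul_conj, map_sub, mul_re, ha, zero_mul, sub_zero] at hdet
  norm_cast at hdet
  simpa using hdet

/-- When `w = 0` the coefficient `b / 0` is `0`; this is harmless, since positive
semidefiniteness of `!![0, b; b', d]` forces `b = 0`. -/
noncomputable def gramExtend (w e : E) (b d : 𝕜) : E :=
  (b / (‖w‖ : 𝕜) ^ 2) • w + (√(re d - ‖b‖ ^ 2 / ‖w‖ ^ 2) : 𝕜) • e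

variable {w e : E} {b b' d : 𝕜}

lemma inner_gramExtend_left (hwe : ⟪w, e⟫_𝕜 = 0)
    (h : (!![⟪w, w⟫_𝕜, b; b', d]).PosSemidef) : ⟪w, gramExtend w e b d⟫_𝕜 = b := by
  have hb := h.norm_sq_le_re_mul_re
  rw [inner_self_eq_norm_sq_to_K] at hb
  rw [gramExtend, inner_add_right, inner_smul_right, inner_smul_right, hwe, mul_zero, add_zero,
    inner_self_eq_norm_sq_to_K]
  rcases eq_or_ne ‖w‖ 0 with hw | hw
  · simp_all
  · field_simp

lemma norm_gramExtend_sq (hwe : ⟪w, e⟫_𝕜 = 0) (he : ‖e‖ = 1)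
    (h : (!![⟪w, w⟫_𝕜, b; b', d]).PosSemidef) : ‖gramExtend w e b d‖ ^ 2 = re d := by
  have hb := h.norm_sq_le_re_mul_re
  rw [inner_self_eq_norm_sq_to_K] at hb
  norm_cast at hb
  have hd : 0 ≤ re d := (nonneg_iff.mp (by simpa using h.diag_nonneg (i := 1))).1
  have ht : 0 ≤ re d - ‖b‖ ^ 2 / ‖w‖ ^ 2 := by
    rcases eq_or_ne ‖w‖ 0 with hw | hw
    · simp [hw, hd]
    · rw [sub_nonneg, div_le_iff₀ (by positivity)]
      linarith
  rw [gramExtend, @norm_add_sq 𝕜, inner_smul_left, inner_smul_right, hwe, mul_zero, mul_zero,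
    map_zero, mul_zero, add_zero, norm_smul, norm_smul, he, mul_one, norm_div, norm_pow,
    norm_ofReal, abs_norm, norm_ofReal, abs_of_nonneg (Real.sqrt_nonneg _), mul_pow,
    Real.sq_sqrt ht]
  rcases eq_or_ne ‖w‖ 0 with hw | hw
  · simp [hw]
  · field_simp
    ring

lemma inner_gramExtend_self (hwe : ⟪w, e⟫_𝕜 = 0) (he : ‖e‖ = 1)
    (h : (!![⟪w, w⟫_𝕜, b; b', d]).PosSemidef) :
    ⟪gramExtend w e b d, gramExtend w e b d⟫_𝕜 = d := by
  rw [inner_self_eq_norm_sq_to_K, ← ofReal_pow, norm_gramExtend_sq hwe he h,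
    ofReal_re_of_nonneg (by simpa using h.diag_nonneg (i := 1))]

end GramExtend

namespace SimpleGraph.IsTree

variable {V : Type*} {G : SimpleGraph V} (hG : G.IsTree) {r : V}

section RootedTree

variable (r) in
noncomputable def pathTo (v : V) : G.Walk v r := (hG.existsUnique_path v r).choose

lemma isPath_pathTo (v : V) : (hG.pathTo r v).IsPath :=
  (hG.existsUnique_path v r).choose_spec.1

lemma eq_pathTo {v : V} {p : G.Walk v r} (hp : p.IsPath) : p = hG.pathTo r v :=
  (hG.existsUnique_path v r).choose_spec.2 p hp

variable (r) in
noncomputable def parent (v : V) : V := (hG.pathTo r v).snd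

variable (r) in
noncomputable def depth (v : V) : ℕ := (hG.pathTo r v).length

lemma pathTo_self : hG.pathTo r r = .nil := (hG.eq_pathTo .nil).symm

lemma not_nil_pathTo {v : V} (hv : v ≠ r) : ¬ (hG.pathTo r v).Nil := Walk.not_nil_of_ne hv

lemma adj_parent {v : V} (hv : v ≠ r) : G.Adj v (hG.parent r v) :=
  Walk.adj_snd (hG.not_nil_pathTo hv)

lemma depth_parent_lt {v : V} (hv : v ≠ r) : hG.depth r (hG.parent r v) < hG.depth r v := by
  rw [depth, depth, parent, ← hG.eq_pathTo (hG.isPath_pathTo v).tail,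
    ← Walk.length_tail_add_one (hG.not_nil_pathTo hv)]
  exact Nat.lt_succ_self _

lemma parent_eq_or_parent_eq_of_adj {v w : V} (h : G.Adj v w) :
    (v ≠ r ∧ hG.parent r v = w) ∨ (w ≠ r ∧ hG.parent r w = v) := by
  by_cases hw : w ∈ (hG.pathTo r v).support
  · have hvr : v ≠ r := by
      rintro rfl
      rw [pathTo_self] at hw
      exact h.ne (by simpa using hw : w = v).symm
    exact .inl ⟨hvr, (hG.isAcyclic.eq_snd_of_adj_start (hG.isPath_pathTo v) h hw).symm⟩
  · have hpath := hG.eq_pathTo ((hG.isPath_pathTo v).cons hw (h := h.symm))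
    refine .inr ⟨?_, ?_⟩
    · rintro rfl
      rw [pathTo_self] at hpath
      exact Walk.not_nil_cons (hpath ▸ Walk.Nil.nil)
    · rw [parent, ← hpath, Walk.snd_cons]

end RootedTree

section GramVectors

variable {𝕜 : Type*} [RCLike 𝕜] [Fintype V] [DecidableEq V] {X : Matrix V V 𝕜}

variable (r X) in
noncomputable def gramVec (v : V) : EuclideanSpace 𝕜 V :=
  if hv : v = r then (√(re (X r r)) : 𝕜) • EuclideanSpace.single r 1
  else gramExtend (gramVec (hG.parent r v)) (EuclideanSpace.single v 1)
    (X (hG.parent r v) v) (X v v)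
termination_by hG.depth r v
decreasing_by exact hG.depth_parent_lt hv

lemma gramVec_of_ne {v : V} (hv : v ≠ r) :
    hG.gramVec r X v = gramExtend (hG.gramVec r X (hG.parent r v)) (EuclideanSpace.single v 1)
      (X (hG.parent r v) v) (X v v) := by
  rw [gramVec, dif_neg hv]

lemma gramVec_apply_of_depth_lt {v k : V} (h : hG.depth r v < hG.depth r k) :
    hG.gramVec r X v k = 0 := by
  induction v using SimpleGraph.IsTree.gramVec.induct hG r with
  | case1 =>
    have hk : k ≠ r := by rintro rfl; exact h.false
    rw [gramVec, dif_pos rfl]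
    simp [hk]
  | case2 v hv ih =>
    have hk : k ≠ v := by rintro rfl; exact h.false
    rw [hG.gramVec_of_ne hv, gramExtend]
    simp [hk, ih ((hG.depth_parent_lt hv).trans h)]

lemma inner_gramVec_parent_single {v : V} (hv : v ≠ r) :
    ⟪hG.gramVec r X (hG.parent r v), EuclideanSpace.single v (1 : 𝕜)⟫_𝕜 = 0 := by
  rw [EuclideanSpace.inner_single_right, hG.gramVec_apply_of_depth_lt (hG.depth_parent_lt hv),
    map_zero, mul_zero]

lemma inner_gramVec_self
    (hedge : ∀ i j, G.Adj i j → (!![X i i, X i j; X j i, X j j]).PosSemidef) (hr : 0 ≤ X r r)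
    (v : V) : ⟪hG.gramVec r X v, hG.gramVec r X v⟫_𝕜 = X v v := by
  induction v using SimpleGraph.IsTree.gramVec.induct hG r with
  | case1 =>
    rw [gramVec, dif_pos rfl, inner_self_eq_norm_sq_to_K, norm_smul, PiLp.norm_single,
      norm_one, mul_one, norm_ofReal, abs_of_nonneg (Real.sqrt_nonneg _), ← ofReal_pow,
      Real.sq_sqrt (nonneg_iff.mp hr).1, ofReal_re_of_nonneg hr]
  | case2 v hv ih =>
    rw [hG.gramVec_of_ne hv]
    refine inner_gramExtend_self (b' := X v (hG.parent r v)) (hG.inner_gramVec_parent_single hv)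
      (by simp) ?_
    rw [ih]
    exact hedge _ _ (hG.adj_parent hv).symm

lemma inner_gramVec_parent
    (hedge : ∀ i j, G.Adj i j → (!![X i i, X i j; X j i, X j j]).PosSemidef) (hr : 0 ≤ X r r)
    {v : V} (hv : v ≠ r) :
    ⟪hG.gramVec r X (hG.parent r v), hG.gramVec r X v⟫_𝕜 = X (hG.parent r v) v := by
  rw [hG.gramVec_of_ne hv]
  refine inner_gramExtend_left (b' := X v (hG.parent r v)) (hG.inner_gramVec_parent_single hv) ?_
  rw [hG.inner_gramVec_self hedge hr]
  exact hedge _ _ (hG.adj_parent hv).symm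

end GramVectors

end SimpleGraph.IsTree

theorem stmt_12_general (V : Type*) [Fintype V] [DecidableEq V] (G : SimpleGraph V)
    (hG : G.IsTree) (X : Matrix V V ℂ)
    (hedge : ∀ i j : V, G.Adj i j →
      (Matrix.PosSemidef !![X i i, X i j; X j i, X j j]))
    (hdiag : ∀ i : V, 0 ≤ X i i) :
    ∃ Y : Matrix V V ℂ, Y.PosSemidef ∧ (∀ i : V, Y i i = X i i) ∧
      ∀ i j : V, G.Adj i j → Y i j = X i j := by
  obtain ⟨r⟩ := hG.connected.nonempty
  refine ⟨gram ℂ (hG.gramVec r X), posSemidef_gram ℂ _,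
    fun i ↦ hG.inner_gramVec_self hedge (hdiag r) i, fun i j hij ↦ ?_⟩
  rcases hG.parent_eq_or_parent_eq_of_adj (r := r) hij with ⟨hi, rfl⟩ | ⟨hj, rfl⟩
  · rw [gram_apply, ← inner_conj_symm, hG.inner_gramVec_parent hedge (hdiag r) hi]
    simpa using (hedge _ _ hij).isHermitian.apply 0 1
  · exact hG.inner_gramVec_parent hedge (hdiag r) hj

/-- PSD completion for tree sparsity patterns: if `G` is a tree, `X` is Hermitian,
every `2×2` principal submatrix corresponding to an edge of `G` is PSD, and the
diagonal of `X` is nonnegative, then there is a PSD matrix `Y` agreeing with `X`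
on the diagonal and on all edges of `G`. -/
theorem stmt_12 (V : Type*) [Fintype V] [DecidableEq V] (G : SimpleGraph V)
    (hG : G.IsTree) (X : Matrix V V ℂ) (hX : X.IsHermitian)
    (hedge : ∀ i j : V, G.Adj i j →
      (Matrix.PosSemidef !![X i i, X i j; X j i, X j j]))
    (hdiag : ∀ i : V, 0 ≤ X i i) :
    ∃ Y : Matrix V V ℂ, Y.PosSemidef ∧ (∀ i : V, Y i i = X i i) ∧
      ∀ i j : V, G.Adj i j → Y i j = X i j :=
  stmt_12_general V G hG X hedge hdiag
end

section
/- There is no 4×4 positive semidefinite Hermitian complex matrix Y with Y_{11} = Y_{22} = Y_{33} = Y_{44} = 1, Y_{12} = Y_{23} = Y_{34} = 1, and Y_{14} = -1, even though every specified 2×2 principal submatrix (corresponding to the edges {1,2}, {2,3}, {3,4}, {1,4} of the 4-cycle) is positive semidefinite. (Hence positive semidefiniteness of all dense principal submatrices of a partial matrix is necessary but not sufficient for the existence of a positive semidefinite completion when the sparsity pattern is not chordal.) -/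
/-!
In a positive semidefinite matrix with unit diagonal, an off-diagonal entry `Y i j = s` of
modulus one forces column `i` to be `conj s` times column `j`, since the quadratic form
vanishes at `e i - conj s • e j`. In a completion the entries `Y 1 2 = Y 2 3 = 1` thus make
columns 1, 2, 3 (zero-based) coincide, so `Y 0 3 = Y 0 1 = 1`, contradicting `Y 0 3 = -1`.
-/

open ComplexOrder

namespace Matrix.PosSemidef

variable {n 𝕜 : Type*} [Fintype n] [DecidableEq n] [RCLike 𝕜]

theorem col_eq_star_mul_col {Y : Matrix n n 𝕜} (hY : Y.PosSemidef) {i j : n} {s : 𝕜}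
    (hs : ‖s‖ = 1) (hii : Y i i = 1) (hjj : Y j j = 1) (hij : Y i j = s) (k : n) :
    Y k i = star s * Y k j := by
  have hji : Y j i = star s := by rw [← hY.isHermitian.apply j i, hij]
  set v : n → 𝕜 := Pi.single i 1 - Pi.single j (star s)
  have hker : Y *ᵥ v = 0 := by
    refine (hY.dotProduct_mulVec_zero_iff v).mp ?_
    simp [v, mulVec_sub, Pi.star_single, sub_dotProduct, hii, hjj, hij, hji, RCLike.mul_conj, hs]
  simpa [v, mulVec_sub, sub_eq_zero, mul_comm] using congrFun hker k

theorem col_eq_col_of_apply_eq_one {Y : Matrix n n 𝕜} (hY : Y.PosSemidef) {i j : n}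
    (hii : Y i i = 1) (hjj : Y j j = 1) (hij : Y i j = 1) (k : n) : Y k i = Y k j := by
  simpa using hY.col_eq_star_mul_col (by simp) hii hjj hij k

end Matrix.PosSemidef

/-- The 4-cycle partial matrix with unit diagonal, `X_{12} = X_{23} = X_{34} = 1`
and `X_{14} = -1` has all its specified `2×2` principal submatrices PSD, yet it
admits no positive semidefinite completion.  Hence PSD-ness of all dense principal
submatrices is not sufficient for completability on nonchordal patterns. -/
theorem stmt_13 :
    (Matrix.PosSemidef !![(1 : ℂ), 1; 1, 1]) ∧
    (Matrix.PosSemidef !![(1 : ℂ), -1; -1, 1]) ∧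
    ¬ ∃ Y : Matrix (Fin 4) (Fin 4) ℂ, Y.PosSemidef ∧
        Y 0 0 = 1 ∧ Y 1 1 = 1 ∧ Y 2 2 = 1 ∧ Y 3 3 = 1 ∧
        Y 0 1 = 1 ∧ Y 1 2 = 1 ∧ Y 2 3 = 1 ∧ Y 0 3 = -1 := by
  refine ⟨?_, ?_, ?_⟩
  · convert Matrix.posSemidef_vecMulVec_self_star ![(1 : ℂ), 1] using 1
    ext i j; fin_cases i <;> fin_cases j <;> simp [Matrix.vecMulVec]
  · convert Matrix.posSemidef_vecMulVec_self_star ![(1 : ℂ), -1] using 1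
    ext i j; fin_cases i <;> fin_cases j <;> simp [Matrix.vecMulVec]
  · rintro ⟨Y, hY, -, h11, h22, h33, h01, h12, h23, h03⟩
    have hcol12 : Y 0 1 = Y 0 2 := hY.col_eq_col_of_apply_eq_one h11 h22 h12 0
    have hcol23 : Y 0 2 = Y 0 3 := hY.col_eq_col_of_apply_eq_one h22 h33 h23 0
    have : (-1 : ℂ) = 1 := by rw [← h03, ← hcol23, ← hcol12, h01]
    norm_num at this
end
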